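/- If a seed Σ contains an oriented cycle 1 → 2 → ⋯ → ℓ → 1 in Γ(B), then the product x'₁⋯x'_ℓ of exchanged cluster variables can be written as Σ_{K ⊊ {1,…,ℓ}} f_K(x₁,…,x_n)·∏_{k ∈ K} x'_k for some polynomials f_K ∈ ZP[x₁,…,x_n]; in particular, each product u_j v_{j⁺} and each of u₁⋯u_ℓ, v₁⋯v_ℓ, where u_j = M_j⁻/x_j and v_j = M_j⁺/x_j are the two terms of the exchange relation divided by x_j, is a Laurent monomial with no negative exponents. -/

import Mathlib

/-! Write `x'_j = u_j + v_j`. Expanding, `∏ (u_j + v_j) = ∑_S ∏_{j ∈ S} u_j ∏_{j ∉ S} v_j`;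
the terms `S = ∅` and `S = univ` are `∏ v` and `∏ u`, and every other `S` is left by the cycle
at some `j` (`j ∈ S`, `j + 1 ∉ S`), so that its term contains the factor `u_j v_{j+1}`.
Inclusion–exclusion over the set `E` of such exits rewrites the sum of these terms as a
`ℤ`-combination of `∏_{j ∈ E} u_j v_{j+1} · ∏_{k ∉ E ∪ (E + 1)} x'_k`, each a polynomial
multiple of a proper subproduct of the `x'_k`.

All the monomial claims come from the edge `j → j + 1`: it makes `x_j` divide `M_{j+1}⁺` and
(by sign-skew-symmetry) `x_{j+1}` divide `M_j⁻`, and `u_j v_{j+1}`, `∏ u`, `∏ v` regroup as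
products of `M_j⁻ / x_{j+1}` and `M_{j+1}⁺ / x_j`. -/

open MvPolynomial

/-- The image of the variable `xᵢ` in the field of rational functions over `R`. -/
noncomputable def Xfrac (R : Type*) [CommRing R] [IsDomain R] (n : ℕ) (i : Fin n) :
    FractionRing (MvPolynomial (Fin n) R) :=
  algebraMap (MvPolynomial (Fin n) R) _ (MvPolynomial.X i)

open Finset

section Monomials
variable (R : Type*) [CommRing R] (n : ℕ)

def monomialSubmonoid : Submonoid (FractionRing (MvPolynomial (Fin n) R)) where
  carrier := {y | ∃ (e : Fin n →₀ ℕ) (r : R), y = algebraMap _ _ (monomial e r)}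
  one_mem' := ⟨0, 1, by simp⟩
  mul_mem' := by
    rintro _ _ ⟨e, r, rfl⟩ ⟨e', r', rfl⟩
    exact ⟨e + e', r * r', by rw [← map_mul, monomial_mul]⟩

variable {R n}

theorem algebraMap_mem_monomialSubmonoid (r : R) :
    algebraMap R (FractionRing (MvPolynomial (Fin n) R)) r ∈ monomialSubmonoid R n :=
  ⟨0, r, by rw [monomial_zero', ← algebraMap_eq, ← IsScalarTower.algebraMap_apply]⟩

theorem Xfrac_mem_monomialSubmonoid [IsDomain R] (i : Fin n) :
    Xfrac R n i ∈ monomialSubmonoid R n :=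
  ⟨Finsupp.single i 1, 1, rfl⟩

theorem mem_range_of_mem_monomialSubmonoid {y : FractionRing (MvPolynomial (Fin n) R)}
    (hy : y ∈ monomialSubmonoid R n) : y ∈ (algebraMap (MvPolynomial (Fin n) R) _).range := by
  obtain ⟨e, r, rfl⟩ := hy
  exact ⟨_, rfl⟩

theorem Xfrac_ne_zero [IsDomain R] (i : Fin n) : Xfrac R n i ≠ 0 :=
  IsFractionRing.to_map_ne_zero_of_mem_nonZeroDivisors <|
    mem_nonZeroDivisors_of_ne_zero (X_ne_zero i)

theorem mul_prod_Xfrac_pow_div_Xfrac_mem_monomialSubmonoid [IsDomain R] (r : R)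
    (k : Fin n → ℕ) {b : Fin n} (hb : 1 ≤ k b) :
    algebraMap R _ r * (∏ i, Xfrac R n i ^ k i) / Xfrac R n b ∈ monomialSubmonoid R n := by
  have hsplit : ∏ i, Xfrac R n i ^ k i =
      (∏ i, Xfrac R n i ^ (k i - if b = i then 1 else 0)) * Xfrac R n b := by
    calc ∏ i, Xfrac R n i ^ k i
        = ∏ i, Xfrac R n i ^ (k i - if b = i then 1 else 0) *
            Xfrac R n i ^ (if b = i then 1 else 0) :=
          prod_congr rfl fun i _ => by
            rw [← pow_add, Nat.sub_add_cancel]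
            split_ifs with h
            · exact h ▸ hb
            · exact Nat.zero_le _
      _ = _ := by rw [prod_mul_distrib, prod_pow_boole, if_pos (mem_univ b)]
  rw [hsplit, ← mul_assoc, mul_div_cancel_right₀ _ (Xfrac_ne_zero (R := R) b)]
  exact mul_mem (algebraMap_mem_monomialSubmonoid r)
    (prod_mem fun i _ => pow_mem (Xfrac_mem_monomialSubmonoid i) _)

end Monomials

section ForcedChoices
variable {ι F : Type*} [Fintype ι] [DecidableEq ι] [CommSemiring F]

theorem Finset.sum_prod_mul_prod_compl_of_subset_of_disjoint (U V : ι → F)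
    {P Q : Finset ι} (hPQ : Disjoint P Q) :
    ∑ S ∈ univ.filter (fun S => P ⊆ S ∧ Disjoint S Q), (∏ i ∈ S, U i) * ∏ i ∈ Sᶜ, V i =
      (∏ i ∈ P, U i) * (∏ i ∈ Q, V i) * ∏ i ∈ (P ∪ Q)ᶜ, (U i + V i) := by
  rw [prod_add, mul_sum]
  symm
  refine sum_nbij' (P ∪ ·) (· \ P) ?_ ?_ ?_ ?_ fun T hT => ?_
  all_goals simp only [mem_filter, mem_univ, true_and, mem_powerset] at *
  · grind [mem_compl, disjoint_left]
  · grind [mem_compl, disjoint_left]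
  · grind [mem_compl, disjoint_left]
  · grind [mem_compl, disjoint_left]
  · have hPT : Disjoint P T := by grind [mem_compl, disjoint_left]
    have hcompl : (P ∪ T)ᶜ = Q ∪ ((P ∪ Q)ᶜ \ T) := by grind [mem_compl, disjoint_left]
    rw [prod_union hPT, hcompl, prod_union (by grind [mem_compl, disjoint_left])]
    ring

end ForcedChoices

section Cycle
variable {ℓ : ℕ} [NeZero ℓ]

open Fin.NatCast in
theorem Fin.eq_empty_or_eq_univ_of_add_one_mem {S : Finset (Fin ℓ)}
    (h : ∀ j ∈ S, j + 1 ∈ S) : S = ∅ ∨ S = univ := by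
  refine S.eq_empty_or_nonempty.imp id fun ⟨s, hs⟩ => eq_univ_of_forall fun i => ?_
  have hreach : ∀ m : ℕ, s + (m : Fin ℓ) ∈ S := by
    intro m
    induction m with
    | zero => simpa using hs
    | succ k ih => simpa [add_assoc] using h _ ih
  simpa using hreach (i - s).val

def subsetsExitedAt (j : Fin ℓ) : Finset (Finset (Fin ℓ)) :=
  univ.filter fun S => j ∈ S ∧ j + 1 ∉ S

theorem inf'_subsetsExitedAt {E : Finset (Fin ℓ)} (hE : E.Nonempty) :
    E.inf' hE subsetsExitedAt = univ.filter fun S => E ⊆ S ∧ Disjoint S (E.image (· + 1)) := by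
  ext S
  simp only [mem_inf', subsetsExitedAt, mem_filter, mem_univ, true_and, subset_iff,
    disjoint_right, mem_image]
  grind

theorem Fin.prod_div_eq_prod_div_comp_add_one {G : Type*} [DivisionCommMonoid G]
    (f g : Fin ℓ → G) : ∏ j, f j / g j = ∏ j, f j / g (j + 1) := by
  rw [prod_div_distrib, prod_div_distrib, ← Equiv.prod_comp (Equiv.addRight 1) g,
    Equiv.coe_addRight]

theorem Fin.prod_div_eq_prod_comp_add_one_div {G : Type*} [DivisionCommMonoid G]
    (f g : Fin ℓ → G) : ∏ j, f j / g j = ∏ j, f (j + 1) / g j := by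
  rw [prod_div_distrib, prod_div_distrib, ← Equiv.prod_comp (Equiv.addRight 1) f,
    Equiv.coe_addRight]

theorem exists_prod_add_eq_sum_proper {P F : Type*} [CommRing P] [CommRing F] [Algebra P F]
    (U V : Fin ℓ → F) (hU : ∏ j, U j ∈ (algebraMap P F).range)
    (hV : ∏ j, V j ∈ (algebraMap P F).range)
    (hUV : ∀ j, U j * V (j + 1) ∈ (algebraMap P F).range) :
    ∃ f : Finset (Fin ℓ) → P, ∏ j, (U j + V j) =
      ∑ K ∈ univ.filter (· ≠ univ), algebraMap P F (f K) * ∏ k ∈ K, (U k + V k) := by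
  set N := Submodule.span P
    ((fun K => ∏ k ∈ K, (U k + V k)) '' ↑(univ.filter fun K : Finset (Fin ℓ) => K ≠ univ))
  suffices ∏ j, (U j + V j) ∈ N by
    obtain ⟨f, hf⟩ := (Submodule.mem_span_image_finset_iff_exists_fun' P).1 this
    exact ⟨f, by simp only [← hf, Algebra.smul_def]⟩
  have smul_mem_of_ne_univ : ∀ y ∈ (algebraMap P F).range, ∀ K ≠ univ,
      y * ∏ k ∈ K, (U k + V k) ∈ N := by
    rintro _ ⟨p, rfl⟩ K hK
    rw [← Algebra.smul_def]
    exact Submodule.smul_mem _ _ (Submodule.subset_span ⟨K, by simpa using hK, rfl⟩)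
  have mem_of_mem_range : ∀ y ∈ (algebraMap P F).range, y ∈ N := fun y hy => by
    simpa using smul_mem_of_ne_univ y hy ∅ univ_nonempty.ne_empty.symm
  rw [Fintype.prod_add, ← sum_sdiff (subset_univ (univ.biUnion subsetsExitedAt)),
    inclusion_exclusion_sum_biUnion]
  refine add_mem (sum_mem fun S hS => ?_) (sum_mem fun ⟨E, hE⟩ _ => zsmul_mem ?_ _)
  · simp only [mem_sdiff, mem_univ, mem_biUnion, subsetsExitedAt, mem_filter, true_and,
      not_exists, not_and, not_not] at hS
    rcases Fin.eq_empty_or_eq_univ_of_add_one_mem hS with rfl | rfl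
    · simpa using mem_of_mem_range _ hV
    · simpa using mem_of_mem_range _ hU
  · rw [inf'_subsetsExitedAt]
    obtain ⟨j, hj⟩ := (mem_filter.1 hE).2
    by_cases hdisj : Disjoint E (E.image (· + 1))
    · rw [sum_prod_mul_prod_compl_of_subset_of_disjoint _ _ hdisj,
        prod_image fun a _ b _ => add_right_cancel, ← prod_mul_distrib]
      refine smul_mem_of_ne_univ _ (Subring.prod_mem _ fun j _ => hUV j) _ ?_
      exact (ne_of_mem_of_not_mem' (mem_univ j) (by simp [hj])).symm
    · rw [filter_false_of_mem fun S _ hS => hdisj (hS.2.mono_left hS.1), sum_empty]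
      exact zero_mem _

end Cycle

theorem neg_of_pos_of_sign_skew_symmetric {ι : Type*} {B : Matrix ι ι ℤ}
    (hB : ∀ i j, (B i j = 0 ∧ B j i = 0) ∨ B i j * B j i < 0) {i j : ι} (hij : 0 < B i j) :
    B j i < 0 := by
  rcases hB i j with ⟨h, -⟩ | h
  · omega
  · nlinarith

theorem cycle_product_expansion_general (R : Type*) [CommRing R] [IsDomain R]
    (n ℓ : ℕ) [NeZero ℓ] (hℓn : ℓ ≤ n)
    (B : Matrix (Fin n) (Fin n) ℤ)
    (hsss : ∀ i j, (B i j = 0 ∧ B j i = 0) ∨ B i j * B j i < 0)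
    (pp pm : Fin n → Rˣ)
    (hcycle : ∀ j : Fin ℓ, 0 < B (Fin.castLE hℓn j) (Fin.castLE hℓn (j + 1))) :
    letI F := FractionRing (MvPolynomial (Fin n) R)
    let X : Fin n → F := Xfrac R n
    let a : R → F := algebraMap R F
    let Mp : Fin n → F := fun j => a (pp j : R) * ∏ i, X i ^ (B i j).toNat
    let Mm : Fin n → F := fun j => a (pm j : R) * ∏ i, X i ^ (-(B i j)).toNat
    let x' : Fin n → F := fun j => (Mp j + Mm j) / X j
    let u : Fin ℓ → F := fun j => Mm (Fin.castLE hℓn j) / X (Fin.castLE hℓn j)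
    let v : Fin ℓ → F := fun j => Mp (Fin.castLE hℓn j) / X (Fin.castLE hℓn j)
    (∃ f : Finset (Fin ℓ) → MvPolynomial (Fin n) R,
      ∏ j : Fin ℓ, x' (Fin.castLE hℓn j) =
        ∑ K ∈ Finset.univ.filter (fun K : Finset (Fin ℓ) => K ≠ Finset.univ),
          algebraMap (MvPolynomial (Fin n) R) F (f K) *
            ∏ k ∈ K, x' (Fin.castLE hℓn k)) ∧
    (∀ j : Fin ℓ, ∃ (e : Fin n →₀ ℕ) (r : R),
      u j * v (j + 1) = algebraMap (MvPolynomial (Fin n) R) F (monomial e r)) ∧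
    (∃ (e : Fin n →₀ ℕ) (r : R),
      ∏ j, u j = algebraMap (MvPolynomial (Fin n) R) F (monomial e r)) ∧
    (∃ (e : Fin n →₀ ℕ) (r : R),
      ∏ j, v j = algebraMap (MvPolynomial (Fin n) R) F (monomial e r)) := by
  intro X a Mp Mm x' u v
  set c := Fin.castLE hℓn
  have hMm : ∀ j, Mm (c j) / X (c (j + 1)) ∈ monomialSubmonoid R n := fun j =>
    mul_prod_Xfrac_pow_div_Xfrac_mem_monomialSubmonoid _ _
      (by have := neg_of_pos_of_sign_skew_symmetric hsss (hcycle j); omega)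
  have hMp : ∀ j, Mp (c (j + 1)) / X (c j) ∈ monomialSubmonoid R n := fun j =>
    mul_prod_Xfrac_pow_div_Xfrac_mem_monomialSubmonoid _ _ (by have := hcycle j; omega)
  have huv : ∀ j, u j * v (j + 1) ∈ monomialSubmonoid R n := fun j => by
    simp only [u, v]
    rw [div_mul_div_comm, mul_comm (X _), ← div_mul_div_comm]
    exact mul_mem (hMm j) (hMp j)
  have hu : ∏ j, u j ∈ monomialSubmonoid R n := by
    simp only [u]
    rw [Fin.prod_div_eq_prod_div_comp_add_one]
    exact prod_mem fun j _ => hMm j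
  have hv : ∏ j, v j ∈ monomialSubmonoid R n := by
    simp only [v]
    rw [Fin.prod_div_eq_prod_comp_add_one_div]
    exact prod_mem fun j _ => hMp j
  have hx' : ∀ j, x' (c j) = u j + v j := fun j => by
    simp only [x', u, v]
    rw [add_div, add_comm]
  refine ⟨?_, huv, hu, hv⟩
  simp only [hx']
  exact exists_prod_add_eq_sum_proper u v (mem_range_of_mem_monomialSubmonoid hu)
    (mem_range_of_mem_monomialSubmonoid hv) fun j => mem_range_of_mem_monomialSubmonoid (huv j)

/-- If the directed graph of a seed contains the oriented cycle `1 → 2 → ⋯ → ℓ → 1`,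
then the product `x'₁ ⋯ x'_ℓ` of exchanged cluster variables is a combination
`Σ_{K ⊊ [1,ℓ]} f_K(x₁,…,x_n) ∏_{k∈K} x'_k` with polynomial coefficients; moreover each
`u_j v_{j⁺}` and each of `u₁⋯u_ℓ`, `v₁⋯v_ℓ` (where `u_j = M_j⁻/x_j`, `v_j = M_j⁺/x_j`)
is a monomial with no negative exponents. -/
theorem cycle_product_expansion (R : Type*) [CommRing R] [IsDomain R]
    (n ℓ : ℕ) [NeZero ℓ] (hℓ : 2 ≤ ℓ) (hℓn : ℓ ≤ n)
    (B : Matrix (Fin n) (Fin n) ℤ)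
    (hsss : ∀ i j, (B i j = 0 ∧ B j i = 0) ∨ B i j * B j i < 0)
    (pp pm : Fin n → Rˣ)
    (hcycle : ∀ j : Fin ℓ, 0 < B (Fin.castLE hℓn j) (Fin.castLE hℓn (j + 1))) :
    letI F := FractionRing (MvPolynomial (Fin n) R)
    let X : Fin n → F := Xfrac R n
    let a : R → F := algebraMap R F
    let Mp : Fin n → F := fun j => a (pp j : R) * ∏ i, X i ^ (B i j).toNat
    let Mm : Fin n → F := fun j => a (pm j : R) * ∏ i, X i ^ (-(B i j)).toNat
    let x' : Fin n → F := fun j => (Mp j + Mm j) / X j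
    let u : Fin ℓ → F := fun j => Mm (Fin.castLE hℓn j) / X (Fin.castLE hℓn j)
    let v : Fin ℓ → F := fun j => Mp (Fin.castLE hℓn j) / X (Fin.castLE hℓn j)
    (∃ f : Finset (Fin ℓ) → MvPolynomial (Fin n) R,
      ∏ j : Fin ℓ, x' (Fin.castLE hℓn j) =
        ∑ K ∈ Finset.univ.filter (fun K : Finset (Fin ℓ) => K ≠ Finset.univ),
          algebraMap (MvPolynomial (Fin n) R) F (f K) *
            ∏ k ∈ K, x' (Fin.castLE hℓn k)) ∧
    (∀ j : Fin ℓ, ∃ (e : Fin n →₀ ℕ) (r : R),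
      u j * v (j + 1) = algebraMap (MvPolynomial (Fin n) R) F (monomial e r)) ∧
    (∃ (e : Fin n →₀ ℕ) (r : R),
      ∏ j, u j = algebraMap (MvPolynomial (Fin n) R) F (monomial e r)) ∧
    (∃ (e : Fin n →₀ ℕ) (r : R),
      ∏ j, v j = algebraMap (MvPolynomial (Fin n) R) F (monomial e r)) :=
  cycle_product_expansion_general R n ℓ hℓn B hsss pp pm hcycle
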